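/- Let H be a connected graph and let H' be obtained from H by adding four new vertices x, v_1, x_1, v_1' together with the following new edges: two edges e_0, e_1 joining x to two distinct vertices of H; the edges x v_1 and v_1 b, where b is a vertex of H; two edges e_0', e_1' joining x_1 to two distinct vertices of H; and the edges x_1 v_1' and v_1' b', where b' is a vertex of H. Then rc(H') ≤ rc(H) + 2. -/

import Mathlib

open SimpleGraph

/-- The rainbow connection number of a graph `G`: the least `k` such that the edges of `G`
can be coloured with colours `0, …, k-1` so that any two distinct vertices are joined by a
path whose edges receive pairwise distinct colours. -/
noncomputable def rc {V : Type*} (G : SimpleGraph V) : ℕ :=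
  sInf {k : ℕ | ∃ c : Sym2 V → ℕ, (∀ e ∈ G.edgeSet, c e < k) ∧
    ∀ u v : V, u ≠ v → ∃ p : G.Walk u v, p.IsPath ∧ (p.edges.map c).Nodup}

/-!
If `c` is a rainbow colouring of `H` with `k` colours, colour every new edge at `x` or `v₁` with `k`
and every new edge at `x₁` or `v₁'` with `k + 1`. Each new vertex has a neighbour in `H` (its
anchor), so two vertices are joined by a rainbow walk: a rainbow walk of `H` between the anchors,
extended by at most one new edge from each gadget. Rainbow walks can be shortened to rainbow paths.

Since `rc` is an infimum, it is `0` when `H` has no rainbow colouring at all (which can happen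
for infinite `H`). The bound then needs that `H'` has none either: collapsing every new vertex
onto its anchor and replacing the new edges by fixed walks of the connected graph `H` turns a
rainbow colouring of `H'` into one of `H`, with fresh colours on the finitely many edges of
those walks.
-/

namespace SimpleGraph

variable {V W : Type*}

def IsRainbowColoring (G : SimpleGraph V) (k : ℕ) (c : Sym2 V → ℕ) : Prop :=
  (∀ e ∈ G.edgeSet, c e < k) ∧ ∀ u v : V, ∃ p : G.Walk u v, (p.edges.map c).Nodup

lemma Walk.exists_isPath_nodup_map_of_injOn {G : SimpleGraph V} {u v : V} (p : G.Walk u v)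
    {c : Sym2 V → ℕ} (hc : Set.InjOn c {e | e ∈ p.edges}) :
    ∃ q : G.Walk u v, q.IsPath ∧ (q.edges.map c).Nodup := by
  classical
  exact ⟨p.bypass, p.bypass_isPath, p.bypass_isPath.isTrail.edges_nodup.map_on
    fun _ he _ he' => hc (p.edges_bypass_subset_edges he) (p.edges_bypass_subset_edges he')⟩

lemma rc_eq_sInf (G : SimpleGraph V) : rc G = sInf {k | ∃ c, G.IsRainbowColoring k c} := by
  refine congrArg sInf (Set.ext fun k => exists_congr fun c => ?_)
  refine and_congr_right' ⟨fun h u v => ?_, fun h u v _ => ?_⟩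
  · by_cases huv : u = v
    · subst huv
      exact ⟨.nil, List.nodup_nil⟩
    · obtain ⟨p, -, hp⟩ := h u v huv
      exact ⟨p, hp⟩
  · obtain ⟨p, hp⟩ := h u v
    exact p.exists_isPath_nodup_map_of_injOn fun _ he _ he' => List.inj_on_of_nodup_map hp he he'

lemma rc_le_add {H : SimpleGraph V} {G : SimpleGraph W} (m : ℕ)
    (hup : ∀ k c, H.IsRainbowColoring k c → ∃ c', G.IsRainbowColoring (k + m) c')
    (hdown : ∀ k c, G.IsRainbowColoring k c → ∃ k' c', H.IsRainbowColoring k' c') :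
    rc G ≤ rc H + m := by
  rw [rc_eq_sInf, rc_eq_sInf H]
  by_cases hH : {k | ∃ c, H.IsRainbowColoring k c}.Nonempty
  · obtain ⟨c, hc⟩ := Nat.sInf_mem hH
    exact Nat.sInf_le (hup _ c hc)
  · have hG : {k | ∃ c, G.IsRainbowColoring k c} = ∅ :=
      Set.eq_empty_of_forall_notMem fun k ⟨c, hc⟩ => hH (hdown k c hc)
    rw [hG, Nat.sInf_empty]
    exact Nat.zero_le _

lemma exists_walk_retract {H : SimpleGraph V} {G : SimpleGraph W} (φ : H →g G) (π : W → V)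
    (L : List (Sym2 V))
    (hseg : ∀ u w, G.Adj u w →
      ∃ s : H.Walk (π u) (π w), ∀ e ∈ s.edges, e ∈ L ∨ e.map φ = s(u, w))
    {u w : W} (p : G.Walk u w) :
    ∃ s : H.Walk (π u) (π w), ∀ e ∈ s.edges, e ∈ L ∨ e.map φ ∈ p.edges := by
  induction p with
  | nil => exact ⟨.nil, by simp⟩
  | cons h q ih =>
    obtain ⟨s₁, hs₁⟩ := hseg _ _ h
    obtain ⟨s₂, hs₂⟩ := ih
    refine ⟨s₁.append s₂, fun e he => ?_⟩
    rw [Walk.edges_append, List.mem_append] at he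
    rw [Walk.edges_cons, List.mem_cons]
    rcases he with he | he
    · exact (hs₁ e he).imp_right Or.inl
    · exact (hs₂ e he).imp_right Or.inr

/-- The edges of `L` get fresh colours, the others keep the colour of their image under `φ`. -/
lemma IsRainbowColoring.exists_of_retract {H : SimpleGraph V} {G : SimpleGraph W} (φ : H →g G)
    (π : W → V) (hπ : ∀ a, π (φ a) = a) (L : List (Sym2 V))
    (hseg : ∀ u w, G.Adj u w →
      ∃ s : H.Walk (π u) (π w), ∀ e ∈ s.edges, e ∈ L ∨ e.map φ = s(u, w))
    {k : ℕ} {c : Sym2 W → ℕ} (hc : G.IsRainbowColoring k c) :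
    ∃ c', H.IsRainbowColoring (k + L.length) c' := by
  classical
  have hφ : Function.Injective (Sym2.map φ) :=
    Sym2.map.injective (Function.LeftInverse.injective hπ)
  refine ⟨fun e => if e ∈ L then k + L.idxOf e else c (e.map φ), fun e he => ?_, fun a a' => ?_⟩
  · dsimp only
    split_ifs with heL
    · exact Nat.add_lt_add_left (List.idxOf_lt_length_iff.mpr heL) k
    · exact (hc.1 _ (φ.map_mem_edgeSet he)).trans_le (Nat.le_add_right k _)
  obtain ⟨p, hp⟩ := hc.2 (φ a) (φ a')
  obtain ⟨s, hs⟩ := exists_walk_retract φ π L hseg p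
  have hlt : ∀ e ∈ s.edges, e ∉ L → c (e.map φ) < k := fun e he heL =>
    hc.1 _ (p.edges_subset_edgeSet ((hs e he).resolve_left heL))
  have hinj : Set.InjOn (fun e => if e ∈ L then k + L.idxOf e else c (e.map φ))
      {e | e ∈ (s.copy (hπ a) (hπ a')).edges} := by
    intro e₁ he₁ e₂ he₂ heq
    simp only [Set.mem_ofPred_eq, Walk.edges_copy] at he₁ he₂
    by_cases h₁ : e₁ ∈ L <;> by_cases h₂ : e₂ ∈ L <;> simp only [h₁, h₂, if_true, if_false] at heq
    · exact (List.idxOf_inj h₁).mp (by omega)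
    · have := hlt _ he₂ h₂; omega
    · have := hlt _ he₁ h₁; omega
    · exact hφ (List.inj_on_of_nodup_map hp ((hs e₁ he₁).resolve_left h₁)
        ((hs e₂ he₂).resolve_left h₂) heq)
  obtain ⟨q, -, hq⟩ := (s.copy (hπ a) (hπ a')).exists_isPath_nodup_map_of_injOn hinj
  exact ⟨q, hq⟩

end SimpleGraph

namespace Case3b

variable {V : Type*}

def graph (H : SimpleGraph V) (c₀ c₁ b d₀ d₁ b' : V) : SimpleGraph (V ⊕ Fin 4) :=
  SimpleGraph.fromRel (fun u v : V ⊕ Fin 4 =>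
        (∃ p q, u = Sum.inl p ∧ v = Sum.inl q ∧ H.Adj p q) ∨
        (u = Sum.inl c₀ ∧ v = Sum.inr 0) ∨
        (u = Sum.inl c₁ ∧ v = Sum.inr 0) ∨
        (u = Sum.inr 0 ∧ v = Sum.inr 1) ∨
        (u = Sum.inr 1 ∧ v = Sum.inl b) ∨
        (u = Sum.inl d₀ ∧ v = Sum.inr 2) ∨
        (u = Sum.inl d₁ ∧ v = Sum.inr 2) ∨
        (u = Sum.inr 2 ∧ v = Sum.inr 3) ∨
        (u = Sum.inr 3 ∧ v = Sum.inl b'))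

def anchor (c₀ b d₀ b' : V) : Fin 4 → V := ![c₀, b, d₀, b']

variable {H : SimpleGraph V} {c₀ c₁ b d₀ d₁ b' : V}

@[simp]
lemma graph_adj_inl_inl {a a' : V} :
    (graph H c₀ c₁ b d₀ d₁ b').Adj (.inl a) (.inl a') ↔ H.Adj a a' := by
  simp only [graph, fromRel_adj]
  constructor
  · rintro ⟨-, h | h⟩ <;> simp_all [H.adj_comm]
  · intro h
    exact ⟨by simpa using h.ne, .inl (.inl ⟨a, a', rfl, rfl, h⟩)⟩

lemma graph_adj_inr_anchor (i : Fin 4) :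
    (graph H c₀ c₁ b d₀ d₁ b').Adj (.inr i) (.inl (anchor c₀ b d₀ b' i)) := by
  fin_cases i <;> simp [graph, anchor]

lemma graph_adj_inr_inr {i j : Fin 4} (hij : i ≠ j) (h : i.val / 2 = j.val / 2) :
    (graph H c₀ c₁ b d₀ d₁ b').Adj (.inr i) (.inr j) := by
  fin_cases i <;> fin_cases j <;> simp_all [graph]

def inlHom : H →g graph H c₀ c₁ b d₀ d₁ b' := ⟨Sum.inl, graph_adj_inl_inl.mpr⟩

/-- `Sum.inr i` is `x, v₁, x₁, v₁'` for `i = 0, 1, 2, 3`, so new edges at `x, v₁` get colour `k`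
and those at `x₁, v₁'` colour `k + 1`; the edge `x₁ v₁'` may as well get `k`. -/
def extendColoringFun (c : Sym2 V → ℕ) (k : ℕ) : V ⊕ Fin 4 → V ⊕ Fin 4 → ℕ
  | .inl a, .inl a' => c s(a, a')
  | .inl _, .inr i | .inr i, .inl _ => k + i.val / 2
  | .inr _, .inr _ => k

def extendColoring (c : Sym2 V → ℕ) (k : ℕ) : Sym2 (V ⊕ Fin 4) → ℕ :=
  Sym2.lift ⟨extendColoringFun c k, by
    rintro (a | i) (a' | j) <;> simp only [extendColoringFun, Sym2.eq_swap]⟩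

@[simp]
lemma extendColoring_mk (c : Sym2 V → ℕ) (k : ℕ) (u w : V ⊕ Fin 4) :
    extendColoring c k s(u, w) = extendColoringFun c k u w := rfl

lemma extendColoring_map_inl (c : Sym2 V → ℕ) (k : ℕ) (e : Sym2 V) :
    extendColoring c k (e.map Sum.inl) = c e := by
  induction e using Sym2.ind with
  | _ a a' => rfl

lemma exists_walk_inl_inl {k : ℕ} {c : Sym2 V → ℕ}
    (hc : H.IsRainbowColoring k c) (a a' : V) :
    ∃ q : (graph H c₀ c₁ b d₀ d₁ b').Walk (.inl a) (.inl a'),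
      (q.edges.map (extendColoring c k)).Nodup ∧ ∀ x ∈ q.edges.map (extendColoring c k), x < k := by
  obtain ⟨p, hp⟩ := hc.2 a a'
  let φ : H →g graph H c₀ c₁ b d₀ d₁ b' := inlHom
  have hmap : ((p.map φ).edges.map (extendColoring c k)) = p.edges.map c := by
    simp only [Walk.edges_map, List.map_map]
    exact List.map_congr_left fun e _ => extendColoring_map_inl c k e
  have hlt : ∀ x ∈ p.edges.map c, x < k := by
    simp only [List.mem_map]
    rintro _ ⟨e, he, rfl⟩
    exact hc.1 e (p.edges_subset_edgeSet he)
  exact ⟨p.map φ, hmap ▸ hp, hmap ▸ hlt⟩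

lemma exists_walk_inr_inl {k : ℕ} {c : Sym2 V → ℕ}
    (hc : H.IsRainbowColoring k c) (i : Fin 4) (a : V) :
    ∃ q : (graph H c₀ c₁ b d₀ d₁ b').Walk (.inr i) (.inl a),
      (q.edges.map (extendColoring c k)).Nodup := by
  obtain ⟨q, hq, hlt⟩ := exists_walk_inl_inl hc (c₀ := c₀) (c₁ := c₁) (b := b) (d₀ := d₀)
    (d₁ := d₁) (b' := b') (anchor c₀ b d₀ b' i) a
  refine ⟨.cons (graph_adj_inr_anchor i) q, ?_⟩
  simp only [Walk.edges_cons, List.map_cons, extendColoring_mk, extendColoringFun]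
  exact List.nodup_cons.mpr ⟨fun h => (hlt _ h).not_ge (Nat.le_add_right k _), hq⟩

lemma exists_walk_inr_inr {k : ℕ} {c : Sym2 V → ℕ}
    (hc : H.IsRainbowColoring k c) (i j : Fin 4) :
    ∃ q : (graph H c₀ c₁ b d₀ d₁ b').Walk (.inr i) (.inr j),
      (q.edges.map (extendColoring c k)).Nodup := by
  by_cases hij : i = j
  · subst hij
    exact ⟨.nil, List.nodup_nil⟩
  by_cases hside : i.val / 2 = j.val / 2
  · exact ⟨.cons (graph_adj_inr_inr hij hside) .nil, by simp⟩
  obtain ⟨q, hq, hlt⟩ := exists_walk_inl_inl hc (c₀ := c₀) (c₁ := c₁) (b := b) (d₀ := d₀)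
    (d₁ := d₁) (b' := b') (anchor c₀ b d₀ b' i) (anchor c₀ b d₀ b' j)
  refine ⟨.cons (graph_adj_inr_anchor i) (q.concat (graph_adj_inr_anchor j).symm), ?_⟩
  simp only [Walk.edges_cons, Walk.edges_concat, List.concat_eq_append, List.map_cons,
    List.map_append, List.map_nil, extendColoring_mk, extendColoringFun, List.nodup_cons,
    List.nodup_append, List.mem_append]
  have hfresh : ∀ n, k + n ∉ q.edges.map (extendColoring c k) :=
    fun n h => (hlt _ h).not_ge (Nat.le_add_right k n)
  grind

lemma isRainbowColoring_extendColoring {k : ℕ} {c : Sym2 V → ℕ}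
    (hc : H.IsRainbowColoring k c) :
    (graph H c₀ c₁ b d₀ d₁ b').IsRainbowColoring (k + 2) (extendColoring c k) := by
  refine ⟨fun e he => ?_, ?_⟩
  · induction e using Sym2.ind with
    | _ u w =>
      rcases u with a | i <;> rcases w with a' | j
      · exact (hc.1 s(a, a') (graph_adj_inl_inl.mp he)).trans_le (Nat.le_add_right k 2)
      all_goals
        simp only [extendColoring_mk, extendColoringFun]
        omega
  rintro (a | i) (a' | j)
  · exact (exists_walk_inl_inl hc a a').imp fun _ => And.left
  · obtain ⟨q, hq⟩ := exists_walk_inr_inl hc j a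
    exact ⟨q.reverse, by simpa using hq⟩
  · exact exists_walk_inr_inl hc i a'
  · exact exists_walk_inr_inr hc i j

def proj (c₀ b d₀ b' : V) : V ⊕ Fin 4 → V := Sum.elim id (anchor c₀ b d₀ b')

lemma exists_walk_proj_of_adj (Q₁ : H.Walk c₁ c₀) (Q₂ : H.Walk c₀ b) (Q₃ : H.Walk d₁ d₀)
    (Q₄ : H.Walk d₀ b') {u w : V ⊕ Fin 4} (h : (graph H c₀ c₁ b d₀ d₁ b').Adj u w) :
    ∃ s : H.Walk (proj c₀ b d₀ b' u) (proj c₀ b d₀ b' w), ∀ e ∈ s.edges,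
      e ∈ Q₁.edges ++ Q₂.edges ++ Q₃.edges ++ Q₄.edges ∨ e.map Sum.inl = s(u, w) := by
  suffices key : ∀ u w : V ⊕ Fin 4,
      ((∃ p q, u = Sum.inl p ∧ w = Sum.inl q ∧ H.Adj p q) ∨
        (u = Sum.inl c₀ ∧ w = Sum.inr 0) ∨
        (u = Sum.inl c₁ ∧ w = Sum.inr 0) ∨
        (u = Sum.inr 0 ∧ w = Sum.inr 1) ∨
        (u = Sum.inr 1 ∧ w = Sum.inl b) ∨
        (u = Sum.inl d₀ ∧ w = Sum.inr 2) ∨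
        (u = Sum.inl d₁ ∧ w = Sum.inr 2) ∨
        (u = Sum.inr 2 ∧ w = Sum.inr 3) ∨
        (u = Sum.inr 3 ∧ w = Sum.inl b')) →
      ∃ s : H.Walk (proj c₀ b d₀ b' u) (proj c₀ b d₀ b' w), ∀ e ∈ s.edges,
        e ∈ Q₁.edges ++ Q₂.edges ++ Q₃.edges ++ Q₄.edges ∨ e.map Sum.inl = s(u, w) by
    rcases (fromRel_adj _ u w).mp h with ⟨-, h | h⟩
    · exact key u w h
    · obtain ⟨s, hs⟩ := key w u h
      refine ⟨s.reverse, fun e he => ?_⟩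
      rw [Walk.edges_reverse, List.mem_reverse] at he
      simpa only [Sym2.eq_swap] using hs e he
  rintro u w (⟨p, q, rfl, rfl, hpq⟩ | ⟨rfl, rfl⟩ | ⟨rfl, rfl⟩ | ⟨rfl, rfl⟩ |
    ⟨rfl, rfl⟩ | ⟨rfl, rfl⟩ | ⟨rfl, rfl⟩ | ⟨rfl, rfl⟩ | ⟨rfl, rfl⟩)
  · exact ⟨.cons hpq .nil, by simp [proj]⟩
  any_goals exact ⟨.nil, fun _ he => absurd he List.not_mem_nil⟩
  all_goals refine ⟨?_, fun e he => .inl ?_⟩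
  · exact Q₁
  · exact List.mem_append_left _ (List.mem_append_left _ (List.mem_append_left _ he))
  · exact Q₂
  · exact List.mem_append_left _ (List.mem_append_left _ (List.mem_append_right _ he))
  · exact Q₃
  · exact List.mem_append_left _ (List.mem_append_right _ he)
  · exact Q₄
  · exact List.mem_append_right _ he

lemma exists_isRainbowColoring_of_graph (hH : H.Connected) {k : ℕ} {c : Sym2 (V ⊕ Fin 4) → ℕ}
    (hc : (graph H c₀ c₁ b d₀ d₁ b').IsRainbowColoring k c) :
    ∃ k' c', H.IsRainbowColoring k' c' :=
  let Q₁ := (hH.preconnected c₁ c₀).some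
  let Q₂ := (hH.preconnected c₀ b).some
  let Q₃ := (hH.preconnected d₁ d₀).some
  let Q₄ := (hH.preconnected d₀ b').some
  ⟨_, hc.exists_of_retract inlHom (proj c₀ b d₀ b') (fun _ => rfl) _
    fun _ _ h => exists_walk_proj_of_adj Q₁ Q₂ Q₃ Q₄ h⟩

end Case3b

theorem rc_case3b_general {V : Type*} (H : SimpleGraph V) (hH : H.Connected)
    (c₀ c₁ b d₀ d₁ b' : V) :
    rc (SimpleGraph.fromRel (fun u v : V ⊕ Fin 4 =>
        (∃ p q, u = Sum.inl p ∧ v = Sum.inl q ∧ H.Adj p q) ∨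
        (u = Sum.inl c₀ ∧ v = Sum.inr 0) ∨
        (u = Sum.inl c₁ ∧ v = Sum.inr 0) ∨
        (u = Sum.inr 0 ∧ v = Sum.inr 1) ∨
        (u = Sum.inr 1 ∧ v = Sum.inl b) ∨
        (u = Sum.inl d₀ ∧ v = Sum.inr 2) ∨
        (u = Sum.inl d₁ ∧ v = Sum.inr 2) ∨
        (u = Sum.inr 2 ∧ v = Sum.inr 3) ∨
        (u = Sum.inr 3 ∧ v = Sum.inl b'))) ≤ rc H + 2 :=
  rc_le_add (G := Case3b.graph H c₀ c₁ b d₀ d₁ b') 2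
    (fun _ _ hc => ⟨_, Case3b.isRainbowColoring_extendColoring hc⟩)
    (fun _ _ hc => Case3b.exists_isRainbowColoring_of_graph hH hc)

/-- Case 3 (second subcase).  Add new vertices `x = Sum.inr 0`, `v₁ = Sum.inr 1`,
`x₁ = Sum.inr 2`, `v₁' = Sum.inr 3` to a connected graph `H`, with two edges `e₀, e₁`
joining `x` to distinct vertices `c₀, c₁` of `H`, the edges `x v₁` and `v₁ b` with
`b ∈ H`, two edges `e₀', e₁'` joining `x₁` to distinct vertices `d₀, d₁` of `H`, and the
edges `x₁ v₁'` and `v₁' b'` with `b' ∈ H`.  Then `rc(H') ≤ rc(H) + 2`. -/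
theorem rc_case3b {V : Type*} (H : SimpleGraph V) (hH : H.Connected)
    (c₀ c₁ b d₀ d₁ b' : V) (hc : c₀ ≠ c₁) (hd : d₀ ≠ d₁) :
    rc (SimpleGraph.fromRel (fun u v : V ⊕ Fin 4 =>
        (∃ p q, u = Sum.inl p ∧ v = Sum.inl q ∧ H.Adj p q) ∨
        (u = Sum.inl c₀ ∧ v = Sum.inr 0) ∨
        (u = Sum.inl c₁ ∧ v = Sum.inr 0) ∨
        (u = Sum.inr 0 ∧ v = Sum.inr 1) ∨
        (u = Sum.inr 1 ∧ v = Sum.inl b) ∨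
        (u = Sum.inl d₀ ∧ v = Sum.inr 2) ∨
        (u = Sum.inl d₁ ∧ v = Sum.inr 2) ∨
        (u = Sum.inr 2 ∧ v = Sum.inr 3) ∨
        (u = Sum.inr 3 ∧ v = Sum.inl b'))) ≤ rc H + 2 :=
  rc_case3b_general H hH c₀ c₁ b d₀ d₁ b'
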